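/- arXiv:1501.06423 — 2 statements merged into one kernel-verified Lean document; each statement's English description precedes it below -/
import Mathlib

section
/- Let k₁,k₂>0, J_1(z)=k₁/z¹²−k₂/z⁶ for z>0 and +∞ for z≤0, J_2(z):=J_1(2z), J_CB:=J_1+J_2, γ:=(2k₁/k₂)^{1/6}·((1+2^{-12})/(1+2^{-6}))^{1/6}, F(a,b):=J_2(γ+(a+b)/2)+(1/2)J_1(γ+a)+(1/2)J_1(γ+b)−J_CB(γ), and B_γ(r):=(1/2)J_1(γ+r_1)+Σ_{i=1}^∞ F(r_i,r_{i+1}). Then there exists a square-summable real sequence r̄=(r̄_i)_{i≥1}∈ℓ²(ℕ) such that B_γ(r̄) = inf{B_γ(r) : r is a real sequence with r_i→0 as i→∞}; i.e., the infimum over sequences tending to zero is attained by an element of ℓ². -/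
open Filter Finset Set

noncomputable section

/-- The Lennard-Jones potential `J₁`, extended by `+∞` on `(-∞,0]`. -/
def LJ1 (k₁ k₂ : ℝ) (z : ℝ) : EReal :=
  if 0 < z then ((k₁ / z ^ 12 - k₂ / z ^ 6 : ℝ) : EReal) else ⊤

/-- The real-valued Lennard-Jones formula. -/
def LJ1r (k₁ k₂ : ℝ) (z : ℝ) : ℝ := k₁ / z ^ 12 - k₂ / z ^ 6

/-- The next-to-nearest neighbour potential `J₂(z) = J₁(2z)`. -/
def LJ2 (k₁ k₂ : ℝ) (z : ℝ) : EReal := LJ1 k₁ k₂ (2 * z)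

/-- The unique minimizer `γ` of `J_CB = J₁ + J₂` for `K = 2`. -/
def gammaNNN (k₁ k₂ : ℝ) : ℝ :=
  (2 * k₁ / k₂) ^ ((1 : ℝ) / 6) *
    ((1 + (2 : ℝ) ^ (-12 : ℤ)) / (1 + (2 : ℝ) ^ (-6 : ℤ))) ^ ((1 : ℝ) / 6)

/-- `J_CB(γ) = J₁(γ) + J₂(γ)` (a real number). -/
def JCBGammaNNN (k₁ k₂ : ℝ) : ℝ :=
  LJ1r k₁ k₂ (gammaNNN k₁ k₂) + LJ1r k₁ k₂ (2 * gammaNNN k₁ k₂)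

/-- `F(a,b) = J₂(γ+(a+b)/2) + ½J₁(γ+a) + ½J₁(γ+b) - J_CB(γ)`. -/
def Fcell (k₁ k₂ : ℝ) (a b : ℝ) : EReal :=
  LJ2 k₁ k₂ (gammaNNN k₁ k₂ + (a + b) / 2) +
    (((1 : ℝ) / 2 : ℝ) : EReal) * LJ1 k₁ k₂ (gammaNNN k₁ k₂ + a) +
    (((1 : ℝ) / 2 : ℝ) : EReal) * LJ1 k₁ k₂ (gammaNNN k₁ k₂ + b) -
    ((JCBGammaNNN k₁ k₂ : ℝ) : EReal)

/-- The boundary-layer functional `B_γ(r) = ½J₁(γ+r₁) + Σ_{i≥1} F(r_i,r_{i+1})`;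
here `r : ℕ → ℝ` with `r i` playing the role of `r_{i+1}`. -/
def Bgam (k₁ k₂ : ℝ) (r : ℕ → ℝ) : EReal :=
  (((1 : ℝ) / 2 : ℝ) : EReal) * LJ1 k₁ k₂ (gammaNNN k₁ k₂ + r 0) +
    ∑' i : ℕ, Fcell k₁ k₂ (r i) (r (i + 1))

/-!
In the variable `t = (γ/z)⁶` the potential becomes `J₁(z) = (k₂/γ⁶)((2080/4097)t² - t)`, and
elementary inequalities for this quadratic give three facts about the cell energy `F`: it is
nonnegative; for `-γ/4 ≤ a ≤ γ` it dominates `c·a²` with `c > 0`; and setting an entry outside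
`(-γ/4, γ)` to `0` does not increase `F` or the boundary term. Hence the infimum of `B_γ` over all
sequences is its infimum over the compact set of sequences with entries in `[-γ/4, γ]`. There `B_γ`
is a constant plus a sum of nonnegative continuous terms, hence lower semicontinuous, so a minimizer
`r̄` exists. Coercivity and `B_γ(r̄) ≤ B_γ(0) < ∞` put `r̄` in `ℓ²`, so `r̄ → 0` is itself
admissible.
-/

open Topology
open scoped ENNReal

lemma EReal.coe_ennreal_tsum {ι : Type*} (f : ι → ℝ≥0∞) :
    ((∑' i, f i : ℝ≥0∞) : EReal) = ∑' i, (f i : EReal) :=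
  let φ : ℝ≥0∞ →+ EReal := ⟨⟨(↑), EReal.coe_ennreal_zero⟩, EReal.coe_ennreal_add⟩
  (ENNReal.summable.hasSum.map φ continuous_coe_ennreal_ereal).tsum_eq.symm

lemma EReal.tsum_eq_coe_tsum_toENNReal {ι : Type*} {f : ι → EReal} (hf : ∀ i, 0 ≤ f i) :
    ∑' i, f i = ((∑' i, (f i).toENNReal : ℝ≥0∞) : EReal) := by
  simp only [EReal.coe_ennreal_tsum, EReal.coe_toENNReal (hf _)]

lemma EReal.tsum_le_tsum_of_nonneg {ι : Type*} {f g : ι → EReal} (hf : ∀ i, 0 ≤ f i)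
    (h : ∀ i, f i ≤ g i) : ∑' i, f i ≤ ∑' i, g i := by
  rw [EReal.tsum_eq_coe_tsum_toENNReal hf,
    EReal.tsum_eq_coe_tsum_toENNReal fun i => (hf i).trans (h i),
    EReal.coe_ennreal_le_coe_ennreal_iff]
  exact ENNReal.tsum_le_tsum fun i => EReal.toENNReal_le_toENNReal (h i)

lemma EReal.eq_coe_add_toENNReal_sub {x : EReal} {c : ℝ} (h : (c : EReal) ≤ x) :
    x = c + ((x - c).toENNReal : EReal) := by
  rw [EReal.coe_toENNReal ((EReal.sub_nonneg (by simp) (by simp)).2 h), add_comm,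
    EReal.sub_add_cancel]

theorem Memℓp.tendsto_atTop_zero {E : Type*} [NormedAddCommGroup E] {p : ℝ≥0∞} {f : ℕ → E}
    (hf : Memℓp f p) (hp : 0 < p.toReal) : Tendsto f atTop (𝓝 0) := by
  rw [tendsto_zero_iff_norm_tendsto_zero]
  have h := (((memℓp_gen_iff hp).1 hf).tendsto_atTop_zero).rpow_const
    (p := p.toReal⁻¹) (Or.inr (by positivity))
  rw [Real.zero_rpow (by positivity)] at h
  exact h.congr fun i => Real.rpow_rpow_inv (norm_nonneg _) hp.ne'

namespace BoundaryLayer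

def ljProfile (t : ℝ) : ℝ := 2080 / 4097 * t ^ 2 - t

lemma ljProfile_ge_neg_half (t : ℝ) : -(1 / 2) ≤ ljProfile t := by
  unfold ljProfile; nlinarith [sq_nonneg (4160 / 4097 * t - 1)]

lemma ljProfile_cell_lower_bound {t₀ t₁ t₂ : ℝ} (h : 128 * t₀ ≤ t₁ + t₂) :
    1 / 8 * min 1 ((t₁ - 1) ^ 2) ≤
      ljProfile t₀ + 1 / 2 * ljProfile t₁ + 1 / 2 * ljProfile t₂ + 65 / 128 := by
  rcases le_or_gt (t₁ + t₂) 126 with hsmall | hlarge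
  · -- `ljProfile` decreases on `[0, 4097/4160]`, which contains `t₀ ≤ (t₁ + t₂) / 128`.
    have hmono : ljProfile ((t₁ + t₂) / 128) ≤ ljProfile t₀ := by
      have hle : t₀ ≤ (t₁ + t₂) / 128 := by linarith
      have hdec : 2080 / 4097 * (t₀ + (t₁ + t₂) / 128) ≤ 1 := by nlinarith
      unfold ljProfile
      nlinarith [mul_nonneg (sub_nonneg.2 hle) (sub_nonneg.2 hdec)]
    suffices 1 / 8 * min 1 ((t₁ - 1) ^ 2) ≤ ljProfile ((t₁ + t₂) / 128) + 1 / 2 * ljProfile t₁ +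
        1 / 2 * ljProfile t₂ + 65 / 128 by linarith
    unfold ljProfile
    rcases le_total ((t₁ - 1) ^ 2) 1 with hm | hm
    · rw [min_eq_right hm]
      nlinarith [sq_nonneg (t₁ + t₂ - 2), sq_nonneg (t₁ - t₂), sq_nonneg (t₁ - 1),
        sq_nonneg (t₂ - 1)]
    · rw [min_eq_left hm]
      nlinarith [sq_nonneg (t₁ + t₂ - 2), sq_nonneg (t₁ - t₂), sq_nonneg (t₁ - 1),
        sq_nonneg (t₂ - 1)]
  · have hmin : 1 / 8 * min 1 ((t₁ - 1) ^ 2) ≤ 1 / 8 := by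
      have := min_le_left (1 : ℝ) ((t₁ - 1) ^ 2); linarith
    have hsum : 1 ≤ 1 / 2 * ljProfile t₁ + 1 / 2 * ljProfile t₂ := by
      have : (t₁ + t₂) * 126 ≤ (t₁ + t₂) * (t₁ + t₂) :=
        mul_le_mul_of_nonneg_left hlarge.le (by linarith)
      unfold ljProfile; nlinarith [sq_nonneg (t₁ - t₂)]
    linarith [ljProfile_ge_neg_half t₀]

lemma ljProfile_one_le {w : ℝ} (hw : w ≤ 1 / 64 ∨ 4096 / 729 ≤ w) :
    ljProfile 1 ≤ ljProfile w := by
  unfold ljProfile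
  rcases hw with hw | hw
  · nlinarith [sq_nonneg w]
  · nlinarith [mul_nonneg (by linarith : (0 : ℝ) ≤ w - 1)
      (by linarith : (0 : ℝ) ≤ 2080 / 4097 * (w + 1) - 1)]

lemma ljProfile_trunc_le {u v w : ℝ} (hu₀ : 0 ≤ u) (hu₁ : u ≤ 1) (hvw : v ≤ w)
    (hw : w ≤ 1 / 64 ∨ 4096 / 729 ≤ w) :
    ljProfile u + 1 / 2 * ljProfile 1 ≤ ljProfile v + 1 / 2 * ljProfile w := by
  have hu : 0 ≤ u * (1 - 2080 / 4097 * u) := mul_nonneg hu₀ (by nlinarith)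
  unfold ljProfile
  rcases hw with hw | hw
  · nlinarith [sq_nonneg v, sq_nonneg w]
  · have : 4096 / 729 * w ≤ w * w := mul_le_mul_of_nonneg_right hw (by linarith)
    nlinarith [sq_nonneg (4160 / 4097 * v - 1)]

lemma one_le_one_add_pow_six_mul {α : ℝ} (h₀ : 0 ≤ α) (h₁ : α ≤ 1) :
    1 ≤ (1 + α) ^ 6 * (1 - 3 / 4 * α) := by
  have e₃ : α ^ 3 ≤ α := by simpa using pow_le_pow_of_le_one h₀ h₁ (by norm_num : 1 ≤ 3)
  have e₅ : α ^ 5 ≤ α ^ 3 := pow_le_pow_of_le_one h₀ h₁ (by norm_num)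
  have e₆ : α ^ 6 ≤ α ^ 3 := pow_le_pow_of_le_one h₀ h₁ (by norm_num)
  have e₇ : α ^ 7 ≤ α ^ 3 := pow_le_pow_of_le_one h₀ h₁ (by norm_num)
  nlinarith [sq_nonneg α, pow_nonneg h₀ 3]

lemma one_add_pow_six_mul_le_one {α : ℝ} (h₀ : -(1 / 4) ≤ α) (h₁ : α ≤ 0) :
    (1 + α) ^ 6 * (1 - 3 / 4 * α) ≤ 1 := by
  obtain ⟨β, rfl⟩ : ∃ β, α = -β := ⟨-α, by ring⟩
  have hβ₀ : 0 ≤ β := by linarith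
  have hβ₁ : β ≤ 1 / 4 := by linarith
  have e₂ : β ^ 2 ≤ 1 / 4 * β := by nlinarith
  have e₄ : β ^ 4 ≤ (1 / 4) ^ 4 := pow_le_pow_left₀ hβ₀ hβ₁ 4
  have e₆ : β ^ 6 ≤ (1 / 4) ^ 6 := pow_le_pow_left₀ hβ₀ hβ₁ 6
  have e₅ : β ^ 5 ≤ 1 / 256 * β := by nlinarith [mul_le_mul_of_nonneg_left e₄ hβ₀]
  have e₇ : β ^ 7 ≤ 1 / 4096 * β := by nlinarith [mul_le_mul_of_nonneg_left e₆ hβ₀]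
  nlinarith [pow_nonneg hβ₀ 3, pow_nonneg hβ₀ 6]

lemma sq_le_min_one_inv_one_add_pow_six_sub_one_sq {α : ℝ} (h₀ : -(1 / 4) ≤ α) (h₁ : α ≤ 1) :
    9 / 16 * α ^ 2 ≤ min 1 ((1 / (1 + α) ^ 6 - 1) ^ 2) := by
  have hP : 0 < (1 + α) ^ 6 := pow_pos (by linarith) 6
  refine le_min (by nlinarith) ?_
  have key : 3 / 4 * |α| * (1 + α) ^ 6 ≤ |(1 + α) ^ 6 - 1| := by
    rcases le_or_gt 0 α with hα | hα
    · have := one_le_one_add_pow_six_mul hα h₁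
      rw [abs_of_nonneg hα, abs_of_nonneg (by nlinarith)]
      nlinarith
    · have := one_add_pow_six_mul_le_one h₀ hα.le
      rw [abs_of_neg hα, abs_of_nonpos (by nlinarith)]
      nlinarith
  rw [div_sub_one hP.ne', div_pow, le_div_iff₀ (by positivity)]
  nlinarith [mul_self_le_mul_self (by positivity) key, sq_abs ((1 + α) ^ 6 - 1), sq_abs α]

variable {k₁ k₂ : ℝ}

lemma gammaNNN_pos (hk₁ : 0 < k₁) (hk₂ : 0 < k₂) : 0 < gammaNNN k₁ k₂ := by
  unfold gammaNNN; positivity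

lemma k₁_eq_mul_gammaNNN_pow_six (hk₁ : 0 < k₁) (hk₂ : 0 < k₂) :
    k₁ = 2080 / 4097 * k₂ * gammaNNN k₁ k₂ ^ 6 := by
  have h : gammaNNN k₁ k₂ ^ 6 = 2 * k₁ / k₂ * (4097 / 4160) := by
    rw [gammaNNN, mul_pow, ← Real.rpow_natCast, ← Real.rpow_natCast,
      ← Real.rpow_mul (by positivity), ← Real.rpow_mul (by positivity)]
    norm_num
  rw [h]
  field_simp
  ring

lemma LJ1r_eq_ljProfile (hk₁ : 0 < k₁) (hk₂ : 0 < k₂) {z : ℝ} (hz : 0 < z) :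
    LJ1r k₁ k₂ z = k₂ / gammaNNN k₁ k₂ ^ 6 * ljProfile (gammaNNN k₁ k₂ ^ 6 / z ^ 6) := by
  have hγ := gammaNNN_pos hk₁ hk₂
  have hk := k₁_eq_mul_gammaNNN_pow_six hk₁ hk₂
  set γ := gammaNNN k₁ k₂
  rw [LJ1r, ljProfile, hk]
  field_simp

lemma JCBGammaNNN_eq (hk₁ : 0 < k₁) (hk₂ : 0 < k₂) :
    JCBGammaNNN k₁ k₂ = k₂ / gammaNNN k₁ k₂ ^ 6 * (-(65 / 128)) := by
  have hγ := gammaNNN_pos hk₁ hk₂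
  rw [JCBGammaNNN, LJ1r_eq_ljProfile hk₁ hk₂ hγ, LJ1r_eq_ljProfile hk₁ hk₂ (by positivity),
    div_self (by positivity), mul_pow, div_mul_cancel_right₀ (by positivity), ljProfile, ljProfile]
  ring

def Fcellr (k₁ k₂ a b : ℝ) : ℝ :=
  LJ1r k₁ k₂ (2 * (gammaNNN k₁ k₂ + (a + b) / 2)) + 1 / 2 * LJ1r k₁ k₂ (gammaNNN k₁ k₂ + a) +
    1 / 2 * LJ1r k₁ k₂ (gammaNNN k₁ k₂ + b) - JCBGammaNNN k₁ k₂

lemma Fcellr_eq_ljProfile (hk₁ : 0 < k₁) (hk₂ : 0 < k₂) {a b : ℝ}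
    (ha : 0 < gammaNNN k₁ k₂ + a) (hb : 0 < gammaNNN k₁ k₂ + b) :
    Fcellr k₁ k₂ a b = k₂ / gammaNNN k₁ k₂ ^ 6 *
      (ljProfile (gammaNNN k₁ k₂ ^ 6 / (gammaNNN k₁ k₂ + a + (gammaNNN k₁ k₂ + b)) ^ 6) +
        1 / 2 * ljProfile (gammaNNN k₁ k₂ ^ 6 / (gammaNNN k₁ k₂ + a) ^ 6) +
        1 / 2 * ljProfile (gammaNNN k₁ k₂ ^ 6 / (gammaNNN k₁ k₂ + b) ^ 6) + 65 / 128) := by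
  rw [Fcellr, show 2 * (gammaNNN k₁ k₂ + (a + b) / 2) =
      gammaNNN k₁ k₂ + a + (gammaNNN k₁ k₂ + b) by ring,
    LJ1r_eq_ljProfile hk₁ hk₂ (by linarith), LJ1r_eq_ljProfile hk₁ hk₂ ha,
    LJ1r_eq_ljProfile hk₁ hk₂ hb, JCBGammaNNN_eq hk₁ hk₂]
  ring

lemma pow_six_mul_pow_six_le_add_pow_six_mul {x y : ℝ} (hx : 0 < x) (hy : 0 < y) :
    128 * (x ^ 6 * y ^ 6) ≤ (x + y) ^ 6 * (x ^ 6 + y ^ 6) := by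
  have h₂ : (4 * (x * y)) ^ 3 ≤ ((x + y) ^ 2) ^ 3 :=
    pow_le_pow_left₀ (by positivity) (by nlinarith [sq_nonneg (x - y)]) 3
  have h₃ : 2 * (x ^ 3 * y ^ 3) ≤ x ^ 6 + y ^ 6 := by nlinarith [sq_nonneg (x ^ 3 - y ^ 3)]
  nlinarith [mul_le_mul h₂ h₃ (by positivity) (by positivity)]

lemma Fcellr_lower_bound (hk₁ : 0 < k₁) (hk₂ : 0 < k₂) {a b : ℝ}
    (ha : 0 < gammaNNN k₁ k₂ + a) (hb : 0 < gammaNNN k₁ k₂ + b) :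
    k₂ / gammaNNN k₁ k₂ ^ 6 *
        (1 / 8 * min 1 ((gammaNNN k₁ k₂ ^ 6 / (gammaNNN k₁ k₂ + a) ^ 6 - 1) ^ 2))
      ≤ Fcellr k₁ k₂ a b := by
  have hγ := gammaNNN_pos hk₁ hk₂
  rw [Fcellr_eq_ljProfile hk₁ hk₂ ha hb]
  gcongr
  apply ljProfile_cell_lower_bound
  set γ := gammaNNN k₁ k₂
  rw [← mul_div_assoc, div_add_div _ _ (by positivity) (by positivity),
    div_le_div_iff₀ (by positivity) (by positivity)]
  nlinarith [mul_le_mul_of_nonneg_left (pow_six_mul_pow_six_le_add_pow_six_mul ha hb)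
    (by positivity : (0 : ℝ) ≤ γ ^ 6)]

lemma LJ1_eq_top {z : ℝ} (hz : z ≤ 0) : LJ1 k₁ k₂ z = ⊤ := if_neg hz.not_gt

lemma LJ1_eq_coe {z : ℝ} (hz : 0 < z) : LJ1 k₁ k₂ z = LJ1r k₁ k₂ z := if_pos hz

lemma half_mul_LJ1_eq_top {z : ℝ} (hz : z ≤ 0) : (((1 : ℝ) / 2 : ℝ) : EReal) * LJ1 k₁ k₂ z = ⊤ := by
  rw [LJ1_eq_top hz, EReal.coe_mul_top_of_pos (by norm_num)]

lemma LJ1_ne_bot (z : ℝ) : LJ1 k₁ k₂ z ≠ ⊥ := by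
  rcases le_or_gt z 0 with hz | hz
  · rw [LJ1_eq_top hz]; exact top_ne_bot
  · rw [LJ1_eq_coe hz]; exact EReal.coe_ne_bot _

lemma half_mul_LJ1_ne_bot (z : ℝ) : (((1 : ℝ) / 2 : ℝ) : EReal) * LJ1 k₁ k₂ z ≠ ⊥ := by
  rcases le_or_gt z 0 with hz | hz
  · rw [half_mul_LJ1_eq_top hz]; exact top_ne_bot
  · rw [LJ1_eq_coe hz, ← EReal.coe_mul]; exact EReal.coe_ne_bot _

lemma Fcell_comm (k₁ k₂ a b : ℝ) : Fcell k₁ k₂ a b = Fcell k₁ k₂ b a := by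
  rw [Fcell, Fcell, add_comm b a, add_right_comm]

lemma Fcell_eq_top_left {a : ℝ} (ha : gammaNNN k₁ k₂ + a ≤ 0) (b : ℝ) : Fcell k₁ k₂ a b = ⊤ := by
  have hLJ2 : LJ2 k₁ k₂ (gammaNNN k₁ k₂ + (a + b) / 2) ≠ ⊥ := LJ1_ne_bot _
  rw [Fcell, half_mul_LJ1_eq_top ha, EReal.add_top_of_ne_bot hLJ2,
    EReal.top_add_of_ne_bot (half_mul_LJ1_ne_bot _), EReal.top_sub_coe]

lemma Fcell_eq_top_right {b : ℝ} (hb : gammaNNN k₁ k₂ + b ≤ 0) (a : ℝ) : Fcell k₁ k₂ a b = ⊤ := by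
  rw [Fcell_comm, Fcell_eq_top_left hb]

lemma Fcell_eq_coe {a b : ℝ} (ha : 0 < gammaNNN k₁ k₂ + a) (hb : 0 < gammaNNN k₁ k₂ + b) :
    Fcell k₁ k₂ a b = Fcellr k₁ k₂ a b := by
  rw [Fcell, LJ2, LJ1_eq_coe (by linarith), LJ1_eq_coe ha, LJ1_eq_coe hb, Fcellr]
  norm_cast

lemma Fcell_nonneg (hk₁ : 0 < k₁) (hk₂ : 0 < k₂) (a b : ℝ) : 0 ≤ Fcell k₁ k₂ a b := by
  rcases le_or_gt (gammaNNN k₁ k₂ + a) 0 with ha | ha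
  · simp [Fcell_eq_top_left ha]
  rcases le_or_gt (gammaNNN k₁ k₂ + b) 0 with hb | hb
  · simp [Fcell_eq_top_right hb]
  have := gammaNNN_pos hk₁ hk₂
  rw [Fcell_eq_coe ha hb, EReal.coe_nonneg]
  exact le_trans (by positivity) (Fcellr_lower_bound hk₁ hk₂ ha hb)

lemma Fcell_zero_zero (hk₁ : 0 < k₁) (hk₂ : 0 < k₂) : Fcell k₁ k₂ 0 0 = 0 := by
  have := gammaNNN_pos hk₁ hk₂
  rw [Fcell_eq_coe (by simpa) (by simpa), EReal.coe_eq_zero, Fcellr, JCBGammaNNN]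
  simp only [add_zero, zero_div]
  ring

lemma sq_le_Fcell (hk₁ : 0 < k₁) (hk₂ : 0 < k₂) {a : ℝ}
    (ha : a ∈ Set.Icc (-(gammaNNN k₁ k₂ / 4)) (gammaNNN k₁ k₂)) (b : ℝ) :
    ((9 / 128 * (k₂ / gammaNNN k₁ k₂ ^ 8) * a ^ 2 : ℝ) : EReal) ≤ Fcell k₁ k₂ a b := by
  have hγ := gammaNNN_pos hk₁ hk₂
  set γ := gammaNNN k₁ k₂
  have hγa : 0 < γ + a := by linarith [ha.1]
  rcases le_or_gt (γ + b) 0 with hb | hb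
  · simp [Fcell_eq_top_right hb]
  rw [Fcell_eq_coe hγa hb, EReal.coe_le_coe_iff]
  refine le_trans ?_ (Fcellr_lower_bound hk₁ hk₂ hγa hb)
  have hα := sq_le_min_one_inv_one_add_pow_six_sub_one_sq (α := a / γ)
    (by rw [le_div_iff₀ hγ]; linarith [ha.1]) (by rw [div_le_one hγ]; exact ha.2)
  have hratio : γ ^ 6 / (γ + a) ^ 6 = 1 / (1 + a / γ) ^ 6 := by
    field_simp
  rw [hratio]
  calc 9 / 128 * (k₂ / γ ^ 8) * a ^ 2 = k₂ / γ ^ 6 * (1 / 8 * (9 / 16 * (a / γ) ^ 2)) := by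
        field_simp; ring
    _ ≤ _ := by gcongr

def trunc (g x : ℝ) : ℝ := if x ∈ Set.Ioo (-(g / 4)) g then x else 0

lemma trunc_mem_Icc {g : ℝ} (hg : 0 ≤ g) (x : ℝ) : trunc g x ∈ Set.Icc (-(g / 4)) g := by
  unfold trunc
  split_ifs with h
  · exact Set.Ioo_subset_Icc_self h
  · constructor <;> linarith

lemma div_pow_six_le_or_ge_of_notMem_Ioo {g b : ℝ} (hg : 0 < g) (hb : 0 < g + b)
    (hout : b ∉ Set.Ioo (-(g / 4)) g) :
    g ^ 6 / (g + b) ^ 6 ≤ 1 / 64 ∨ 4096 / 729 ≤ g ^ 6 / (g + b) ^ 6 := by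
  rw [Set.mem_Ioo, not_and_or, not_lt, not_lt] at hout
  rcases hout with hlow | hhigh
  · right
    have : (g + b) ^ 6 ≤ (3 / 4 * g) ^ 6 := pow_le_pow_left₀ hb.le (by linarith) 6
    rw [le_div_iff₀ (by positivity)]
    nlinarith
  · left
    have : (2 * g) ^ 6 ≤ (g + b) ^ 6 := pow_le_pow_left₀ (by linarith) (by linarith) 6
    rw [div_le_div_iff₀ (by positivity) (by norm_num)]
    nlinarith

lemma Fcellr_zero_right_le (hk₁ : 0 < k₁) (hk₂ : 0 < k₂) {a b : ℝ}
    (ha : 0 < gammaNNN k₁ k₂ + a) (hb : 0 < gammaNNN k₁ k₂ + b)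
    (hout : b ∉ Set.Ioo (-(gammaNNN k₁ k₂ / 4)) (gammaNNN k₁ k₂)) :
    Fcellr k₁ k₂ a 0 ≤ Fcellr k₁ k₂ a b := by
  have hγ := gammaNNN_pos hk₁ hk₂
  have h₀ : 0 < gammaNNN k₁ k₂ + 0 := by simpa
  rw [Fcellr_eq_ljProfile hk₁ hk₂ ha hb, Fcellr_eq_ljProfile hk₁ hk₂ ha h₀, add_zero,
    div_self (by positivity)]
  set γ := gammaNNN k₁ k₂
  have key := ljProfile_trunc_le (u := γ ^ 6 / (γ + a + γ) ^ 6) (v := γ ^ 6 / (γ + a + (γ + b)) ^ 6)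
    (by positivity) ((div_le_one (by positivity)).2 (pow_le_pow_left₀ hγ.le (by linarith) 6))
    (div_le_div_of_nonneg_left (by positivity) (by positivity)
      (pow_le_pow_left₀ hb.le (by linarith) 6))
    (div_pow_six_le_or_ge_of_notMem_Ioo hγ hb hout)
  exact mul_le_mul_of_nonneg_left (by linarith) (by positivity)

lemma Fcell_zero_right_le (hk₁ : 0 < k₁) (hk₂ : 0 < k₂) {b : ℝ}
    (hout : b ∉ Set.Ioo (-(gammaNNN k₁ k₂ / 4)) (gammaNNN k₁ k₂)) (a : ℝ) :
    Fcell k₁ k₂ a 0 ≤ Fcell k₁ k₂ a b := by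
  have hγ := gammaNNN_pos hk₁ hk₂
  rcases le_or_gt (gammaNNN k₁ k₂ + b) 0 with hb | hb
  · simp [Fcell_eq_top_right hb]
  rcases le_or_gt (gammaNNN k₁ k₂ + a) 0 with ha | ha
  · simp [Fcell_eq_top_left ha]
  rw [Fcell_eq_coe ha (by simpa), Fcell_eq_coe ha hb, EReal.coe_le_coe_iff]
  exact Fcellr_zero_right_le hk₁ hk₂ ha hb hout

lemma Fcell_trunc_right_le (hk₁ : 0 < k₁) (hk₂ : 0 < k₂) (a b : ℝ) :
    Fcell k₁ k₂ a (trunc (gammaNNN k₁ k₂) b) ≤ Fcell k₁ k₂ a b := by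
  unfold trunc
  split_ifs with hb
  · rfl
  · exact Fcell_zero_right_le hk₁ hk₂ hb a

lemma Fcell_trunc_le (hk₁ : 0 < k₁) (hk₂ : 0 < k₂) (a b : ℝ) :
    Fcell k₁ k₂ (trunc (gammaNNN k₁ k₂) a) (trunc (gammaNNN k₁ k₂) b) ≤ Fcell k₁ k₂ a b := by
  refine (Fcell_trunc_right_le hk₁ hk₂ _ b).trans ?_
  rw [Fcell_comm, Fcell_comm k₁ k₂ a]
  exact Fcell_trunc_right_le hk₁ hk₂ b a

lemma half_mul_LJ1_trunc_le (hk₁ : 0 < k₁) (hk₂ : 0 < k₂) (c : ℝ) :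
    (((1 : ℝ) / 2 : ℝ) : EReal) * LJ1 k₁ k₂ (gammaNNN k₁ k₂ + trunc (gammaNNN k₁ k₂) c)
      ≤ (((1 : ℝ) / 2 : ℝ) : EReal) * LJ1 k₁ k₂ (gammaNNN k₁ k₂ + c) := by
  have hγ := gammaNNN_pos hk₁ hk₂
  unfold trunc
  split_ifs with hin
  · rfl
  rcases le_or_gt (gammaNNN k₁ k₂ + c) 0 with hc | hc
  · rw [half_mul_LJ1_eq_top hc]; exact le_top
  rw [add_zero, LJ1_eq_coe hγ, LJ1_eq_coe hc, ← EReal.coe_mul, ← EReal.coe_mul,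
    EReal.coe_le_coe_iff, LJ1r_eq_ljProfile hk₁ hk₂ hγ, LJ1r_eq_ljProfile hk₁ hk₂ hc,
    div_self (by positivity)]
  gcongr
  exact ljProfile_one_le (div_pow_six_le_or_ge_of_notMem_Ioo hγ hc hin)

lemma Bgam_trunc_le (hk₁ : 0 < k₁) (hk₂ : 0 < k₂) (r : ℕ → ℝ) :
    Bgam k₁ k₂ (fun i => trunc (gammaNNN k₁ k₂) (r i)) ≤ Bgam k₁ k₂ r :=
  add_le_add (half_mul_LJ1_trunc_le hk₁ hk₂ (r 0))
    (EReal.tsum_le_tsum_of_nonneg (fun _ => Fcell_nonneg hk₁ hk₂ _ _)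
      fun i => Fcell_trunc_le hk₁ hk₂ (r i) (r (i + 1)))

def halfLJ1Min (k₁ k₂ : ℝ) : ℝ := -(k₂ ^ 2 / (8 * k₁))

lemma halfLJ1Min_le (hk₁ : 0 < k₁) (z : ℝ) :
    (halfLJ1Min k₁ k₂ : EReal) ≤ (((1 : ℝ) / 2 : ℝ) : EReal) * LJ1 k₁ k₂ z := by
  rcases le_or_gt z 0 with hz | hz
  · rw [half_mul_LJ1_eq_top hz]; exact le_top
  rw [LJ1_eq_coe hz, ← EReal.coe_mul, EReal.coe_le_coe_iff, halfLJ1Min, LJ1r]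
  have hsq : 1 / 2 * (k₁ / z ^ 12 - k₂ / z ^ 6) + k₂ ^ 2 / (8 * k₁) =
      (k₁ / z ^ 6 - k₂ / 2) ^ 2 / (2 * k₁) := by
    field_simp; ring
  have : 0 ≤ (k₁ / z ^ 6 - k₂ / 2) ^ 2 / (2 * k₁) := by positivity
  linarith

def boundaryEnergy (k₁ k₂ : ℝ) (r : ℕ → ℝ) : ℝ≥0∞ :=
  ((((1 : ℝ) / 2 : ℝ) : EReal) * LJ1 k₁ k₂ (gammaNNN k₁ k₂ + r 0) - halfLJ1Min k₁ k₂).toENNReal +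
    ∑' i, (Fcell k₁ k₂ (r i) (r (i + 1))).toENNReal

lemma Bgam_eq_add_boundaryEnergy (hk₁ : 0 < k₁) (hk₂ : 0 < k₂) (r : ℕ → ℝ) :
    Bgam k₁ k₂ r = halfLJ1Min k₁ k₂ + boundaryEnergy k₁ k₂ r := by
  rw [Bgam, boundaryEnergy, EReal.coe_ennreal_add, ← add_assoc,
    ← EReal.eq_coe_add_toENNReal_sub (halfLJ1Min_le hk₁ _),
    EReal.tsum_eq_coe_tsum_toENNReal fun i => Fcell_nonneg hk₁ hk₂ _ _]

lemma boundaryEnergy_zero_ne_top (hk₁ : 0 < k₁) (hk₂ : 0 < k₂) : boundaryEnergy k₁ k₂ 0 ≠ ⊤ := by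
  have hγ := gammaNNN_pos hk₁ hk₂
  simp only [boundaryEnergy, Pi.zero_apply, add_zero, Fcell_zero_zero hk₁ hk₂,
    EReal.toENNReal_zero, tsum_zero]
  rw [LJ1_eq_coe hγ, ← EReal.coe_mul, ← EReal.coe_sub, EReal.real_coe_toENNReal]
  exact ENNReal.ofReal_ne_top

def window (g : ℝ) : Set (ℕ → ℝ) := Set.univ.pi fun _ => Set.Icc (-(g / 4)) g

lemma isCompact_window (g : ℝ) : IsCompact (window g) :=
  isCompact_univ_pi fun _ => isCompact_Icc

lemma zero_mem_window {g : ℝ} (hg : 0 ≤ g) : (0 : ℕ → ℝ) ∈ window g :=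
  fun _ _ => ⟨by simp only [Pi.zero_apply]; linarith, hg⟩

lemma trunc_mem_window {g : ℝ} (hg : 0 ≤ g) (r : ℕ → ℝ) : (fun i => trunc g (r i)) ∈ window g :=
  fun _ _ => trunc_mem_Icc hg _

lemma continuousAt_LJ1r {z : ℝ} (hz : z ≠ 0) : ContinuousAt (LJ1r k₁ k₂) z := by
  unfold LJ1r
  fun_prop (disch := exact pow_ne_zero _ hz)

lemma lowerSemicontinuousOn_boundaryEnergy (hk₁ : 0 < k₁) (hk₂ : 0 < k₂) :
    LowerSemicontinuousOn (boundaryEnergy k₁ k₂) (window (gammaNNN k₁ k₂)) := by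
  have hγ := gammaNNN_pos hk₁ hk₂
  set γ := gammaNNN k₁ k₂
  have hpos : ∀ r ∈ window γ, ∀ i, 0 < γ + r i := fun r hr i => by linarith [(hr i trivial).1]
  have hLJ : ∀ f : (ℕ → ℝ) → ℝ, Continuous f → (∀ r ∈ window γ, 0 < f r) →
      ContinuousOn (fun r => LJ1r k₁ k₂ (f r)) (window γ) := fun f hf hfpos r hr =>
    ((continuousAt_LJ1r (hfpos r hr).ne').comp hf.continuousAt).continuousWithinAt
  refine ContinuousOn.lowerSemicontinuousOn ?_ |>.add
    (lowerSemicontinuousOn_tsum fun i => ContinuousOn.lowerSemicontinuousOn ?_)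
  · refine ContinuousOn.congr (f := fun r => ENNReal.ofReal (1 / 2 * LJ1r k₁ k₂ (γ + r 0) -
      halfLJ1Min k₁ k₂)) ?_ fun r hr => ?_
    · exact ENNReal.continuous_ofReal.comp_continuousOn
        ((continuousOn_const.mul (hLJ _ (by fun_prop) fun r hr => hpos r hr 0)).sub
          continuousOn_const)
    · rw [LJ1_eq_coe (hpos r hr 0), ← EReal.coe_mul, ← EReal.coe_sub, EReal.real_coe_toENNReal]
  · refine ContinuousOn.congr (f := fun r => ENNReal.ofReal (Fcellr k₁ k₂ (r i) (r (i + 1))))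
      ?_ fun r hr => ?_
    · refine ENNReal.continuous_ofReal.comp_continuousOn ?_
      unfold Fcellr
      refine ((((hLJ _ (by fun_prop) fun r hr => ?_).add
        (continuousOn_const.mul (hLJ _ (by fun_prop) fun r hr => hpos r hr i))).add
        (continuousOn_const.mul (hLJ _ (by fun_prop) fun r hr => hpos r hr (i + 1)))).sub
        continuousOn_const)
      linarith [hpos r hr i, hpos r hr (i + 1)]
    · rw [Fcell_eq_coe (hpos r hr i) (hpos r hr (i + 1)), EReal.real_coe_toENNReal]

lemma Bgam_le_of_isMinOn (hk₁ : 0 < k₁) (hk₂ : 0 < k₂) {rbar : ℕ → ℝ}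
    (hmin : IsMinOn (boundaryEnergy k₁ k₂) (window (gammaNNN k₁ k₂)) rbar) (r : ℕ → ℝ) :
    Bgam k₁ k₂ rbar ≤ Bgam k₁ k₂ r :=
  calc Bgam k₁ k₂ rbar ≤ Bgam k₁ k₂ (fun i => trunc (gammaNNN k₁ k₂) (r i)) := by
        rw [Bgam_eq_add_boundaryEnergy hk₁ hk₂, Bgam_eq_add_boundaryEnergy hk₁ hk₂]
        gcongr
        exact EReal.coe_ennreal_le_coe_ennreal_iff.2 <|
          isMinOn_iff.1 hmin _ (trunc_mem_window (gammaNNN_pos hk₁ hk₂).le r)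
    _ ≤ Bgam k₁ k₂ r := Bgam_trunc_le hk₁ hk₂ r

lemma memℓp_two_of_mem_window (hk₁ : 0 < k₁) (hk₂ : 0 < k₂) {r : ℕ → ℝ}
    (hr : r ∈ window (gammaNNN k₁ k₂)) (hE : boundaryEnergy k₁ k₂ r ≠ ⊤) : Memℓp r 2 := by
  have hc : 0 < 9 / 128 * (k₂ / gammaNNN k₁ k₂ ^ 8) := by
    have := gammaNNN_pos hk₁ hk₂; positivity
  have hsum : ∑' i, ENNReal.ofReal (9 / 128 * (k₂ / gammaNNN k₁ k₂ ^ 8) * r i ^ 2) ≠ ⊤ := by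
    refine ne_top_of_le_ne_top hE (le_trans (ENNReal.tsum_le_tsum fun i => ?_) le_add_self)
    rw [← EReal.real_coe_toENNReal]
    exact EReal.toENNReal_le_toENNReal (sq_le_Fcell hk₁ hk₂ (hr i trivial) (r (i + 1)))
  have hsq : Summable fun i => r i ^ 2 := by
    refine ((ENNReal.summable_toReal hsum).mul_left (9 / 128 * (k₂ / gammaNNN k₁ k₂ ^ 8))⁻¹).congr
      fun i => ?_
    rw [ENNReal.toReal_ofReal (by positivity), inv_mul_cancel_left₀ hc.ne']
  exact memℓp_gen (hsq.congr fun i => by simp)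

end BoundaryLayer

open BoundaryLayer

/-- the infimum of `B_γ` over sequences tending to `0` is attained by a
square-summable sequence `r̄ ∈ ℓ²(ℕ)`. -/
theorem boundary_layer_minimizer_exists (k₁ k₂ : ℝ) (hk₁ : 0 < k₁) (hk₂ : 0 < k₂) :
    ∃ rbar : ℕ → ℝ, Memℓp rbar 2 ∧
      Bgam k₁ k₂ rbar = sInf {y : EReal | ∃ r : ℕ → ℝ,
        Filter.Tendsto r Filter.atTop (nhds 0) ∧ y = Bgam k₁ k₂ r} := by
  have hγ := (gammaNNN_pos hk₁ hk₂).le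
  obtain ⟨rbar, hwin, hmin⟩ := (lowerSemicontinuousOn_boundaryEnergy hk₁ hk₂).exists_isMinOn
    ⟨0, zero_mem_window hγ⟩ (isCompact_window _)
  have hfin : boundaryEnergy k₁ k₂ rbar ≠ ⊤ :=
    ne_top_of_le_ne_top (boundaryEnergy_zero_ne_top hk₁ hk₂)
      (isMinOn_iff.1 hmin 0 (zero_mem_window hγ))
  have hl2 : Memℓp rbar 2 := memℓp_two_of_mem_window hk₁ hk₂ hwin hfin
  refine ⟨rbar, hl2, le_antisymm (le_sInf ?_)
    (sInf_le ⟨rbar, hl2.tendsto_atTop_zero (by norm_num), rfl⟩)⟩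
  rintro _ ⟨r, -, rfl⟩
  exact Bgam_le_of_isMinOn hk₁ hk₂ hmin r
end
end

section
/- Let k₁,k₂>0, J_1(z)=k₁/z¹²−k₂/z⁶ for z>0 and +∞ for z≤0, J_2(z):=J_1(2z), J_CB:=J_1+J_2, γ:=(2k₁/k₂)^{1/6}·((1+2^{-12})/(1+2^{-6}))^{1/6}, F(a,b):=J_2(γ+(a+b)/2)+(1/2)J_1(γ+a)+(1/2)J_1(γ+b)−J_CB(γ), and B_γ(r):=(1/2)J_1(γ+r_1)+Σ_{i=1}^∞ F(r_i,r_{i+1}). Suppose r∈ℓ²(ℕ) satisfies B_γ(r)=inf{B_γ(s) : s a real sequence with s_i→0}. Then γ+r_i>0 for all i≥1, and r satisfies the Euler–Lagrange equations: J_1'(γ+r_1)+(1/2)J_2'(γ+(r_1+r_2)/2)=0, and for every i≥2: (1/2)J_2'(γ+(r_{i−1}+r_i)/2)+J_1'(γ+r_i)+(1/2)J_2'(γ+(r_i+r_{i+1})/2)=0. -/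
open Filter Finset Set

noncomputable section

/-- The real-valued next-to-nearest neighbour potential `J₂(z) = J₁(2z)` on `(0,∞)`. -/
def LJ2r (k₁ k₂ : ℝ) (z : ℝ) : ℝ := LJ1r k₁ k₂ (2 * z)

/-! The zero sequence has finite energy, and a site with `γ + r_i ≤ 0` makes a cell, hence
`B_γ(r)`, equal to `+∞`; so a minimizer has all sites positive. Because `γ` is a critical point
of `J_CB`, every cell energy satisfies `F(a,b) = O(a² + b²)` near the origin, so for `r ∈ ℓ²` the
energy `B_γ(r)` is a convergent real series. Moving the single coordinate `r_m` by `t` changes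
only the cells that contain it, so `t ↦ B_γ(r + t e_m)` is a differentiable real function near
`0` with a local minimum at `0`, and its vanishing derivative is the Euler–Lagrange equation at
site `m`. -/

open Function Topology

theorem abs_sub_sub_mul_le_of_abs_deriv_sub_le {f f' : ℝ → ℝ} {s : Set ℝ} (hs : Convex ℝ s)
    (hf : ∀ x ∈ s, HasDerivAt f (f' x) x) {c K : ℝ} (hc : c ∈ s) (hK : 0 ≤ K)
    (hf' : ∀ x ∈ s, |f' x - f' c| ≤ K * |x - c|) {x : ℝ} (hx : x ∈ s) :
    |f x - f c - f' c * (x - c)| ≤ K * (x - c) ^ 2 := by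
  have hseg : uIcc c x ⊆ s := segment_eq_uIcc c x ▸ hs.segment_subset hc hx
  have hg : ∀ y ∈ uIcc c x,
      HasDerivWithinAt (fun y => f y - f' c * y) (f' y - f' c) (uIcc c x) y := fun y hy =>
    ((hf y (hseg hy)).sub ((hasDerivAt_id y).const_mul (f' c))).hasDerivWithinAt.congr_deriv
      (by ring)
  have hbound : ∀ y ∈ uIcc c x, ‖f' y - f' c‖ ≤ K * |x - c| := fun y hy =>
    (hf' y (hseg hy)).trans (mul_le_mul_of_nonneg_left (abs_sub_left_of_mem_uIcc hy) hK)
  have := convex_uIcc c x |>.norm_image_sub_le_of_norm_hasDerivWithin_le hg hbound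
    left_mem_uIcc right_mem_uIcc
  rw [Real.norm_eq_abs, Real.norm_eq_abs, mul_assoc, abs_mul_abs_self] at this
  convert this using 2 <;> ring

theorem Memℓp.summable_sq {α : Type*} {r : α → ℝ} (hr : Memℓp r 2) :
    Summable fun i => r i ^ 2 := by
  simpa only [ENNReal.toReal_ofNat, Real.rpow_two, Real.norm_eq_abs, sq_abs] using
    hr.summable (by norm_num)

theorem tendsto_zero_of_summable_sq {r : ℕ → ℝ} (h : Summable fun i => r i ^ 2) :
    Tendsto r atTop (𝓝 0) := by
  rw [tendsto_zero_iff_abs_tendsto_zero]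
  simpa [comp_def, Real.sqrt_sq_eq_abs] using h.tendsto_atTop_zero.sqrt

theorem cells_update_zero {α β : Type*} (c : α → α → β) (r : ℕ → α) (x : α) :
    (fun k => c (update r 0 x k) (update r 0 x (k + 1))) =
      update (fun k => c (r k) (r (k + 1))) 0 (c x (r 1)) := by
  funext k
  simp only [update_apply]
  split_ifs <;> subst_vars <;> first | rfl | contradiction

theorem cells_update_succ {α β : Type*} (c : α → α → β) (r : ℕ → α) (i : ℕ) (x : α) :
    (fun k => c (update r (i + 1) x k) (update r (i + 1) x (k + 1))) =
      update (update (fun k => c (r k) (r (k + 1))) (i + 1) (c x (r (i + 2)))) i (c (r i) x) := by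
  funext k
  simp only [update_apply]
  split_ifs <;> subst_vars <;> first | rfl | contradiction | omega

namespace EReal

theorem sum_ne_bot {β : Type*} {f : β → EReal} (hf : ∀ i, f i ≠ ⊥) (s : Finset β) :
    ∑ i ∈ s, f i ≠ ⊥ := by
  classical
  induction s using Finset.induction with
  | empty => simp
  | insert a s has ih =>
    rw [Finset.sum_insert has]
    simp [EReal.add_eq_bot_iff, hf a, ih]

theorem hasSum_top_of_ne_bot {β : Type*} {f : β → EReal} (hf : ∀ i, f i ≠ ⊥) {n : β}
    (hn : f n = ⊤) : HasSum f ⊤ := by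
  classical
  refine tendsto_const_nhds.congr' (eventually_atTop.2 ⟨{n}, fun s hs => ?_⟩)
  dsimp only
  rw [← Finset.add_sum_erase s f (hs (Finset.mem_singleton_self n)), hn,
    top_add_of_ne_bot (sum_ne_bot hf _)]

theorem hasSum_coe {β : Type*} {f : β → ℝ} {a : ℝ} (h : HasSum f a) :
    HasSum (fun i => (f i : EReal)) a :=
  h.map (⟨⟨(↑), coe_zero⟩, coe_add⟩ : ℝ →+ EReal) continuous_coe_real_ereal

end EReal

def LJ1rDeriv (k₁ k₂ : ℝ) (z : ℝ) : ℝ := -12 * k₁ / z ^ 13 + 6 * k₂ / z ^ 7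

theorem hasDerivAt_LJ1r (k₁ k₂ : ℝ) {z : ℝ} (hz : z ≠ 0) :
    HasDerivAt (LJ1r k₁ k₂) (LJ1rDeriv k₁ k₂ z) z := by
  refine (((hasDerivAt_const z k₁).div (hasDerivAt_pow 12 z) (pow_ne_zero _ hz)).sub
    ((hasDerivAt_const z k₂).div (hasDerivAt_pow 6 z) (pow_ne_zero _ hz))).congr_deriv ?_
  unfold LJ1rDeriv
  field_simp
  ring

theorem hasDerivAt_LJ2r (k₁ k₂ : ℝ) {z : ℝ} (hz : z ≠ 0) :
    HasDerivAt (LJ2r k₁ k₂) (2 * LJ1rDeriv k₁ k₂ (2 * z)) z := by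
  have h := (hasDerivAt_LJ1r k₁ k₂ (mul_ne_zero two_ne_zero hz)).comp z
    ((hasDerivAt_id z).const_mul 2)
  exact h.congr_deriv (by simp [mul_comm])

theorem hasDerivAt_LJ1rDeriv (k₁ k₂ : ℝ) {z : ℝ} (hz : z ≠ 0) :
    HasDerivAt (LJ1rDeriv k₁ k₂) (156 * k₁ / z ^ 14 - 42 * k₂ / z ^ 8) z := by
  refine (((hasDerivAt_const z (-12 * k₁)).div (hasDerivAt_pow 13 z) (pow_ne_zero _ hz)).add
    ((hasDerivAt_const z (6 * k₂)).div (hasDerivAt_pow 7 z) (pow_ne_zero _ hz))).congr_deriv ?_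
  field_simp
  ring

theorem exists_abs_LJ1rDeriv_sub_le {k₁ k₂ m : ℝ} (hk₁ : 0 < k₁) (hk₂ : 0 < k₂) (hm : 0 < m) :
    ∃ K, 0 ≤ K ∧ ∀ x ∈ Ici m, ∀ y ∈ Ici m,
      |LJ1rDeriv k₁ k₂ x - LJ1rDeriv k₁ k₂ y| ≤ K * |x - y| := by
  refine ⟨156 * k₁ / m ^ 14 + 42 * k₂ / m ^ 8, by positivity, fun x hx y hy => ?_⟩
  have hbound : ∀ z ∈ Ici m,
      ‖156 * k₁ / z ^ 14 - 42 * k₂ / z ^ 8‖ ≤ 156 * k₁ / m ^ 14 + 42 * k₂ / m ^ 8 := by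
    intro z (hz : m ≤ z)
    have hz₀ : 0 < z := hm.trans_le hz
    calc ‖156 * k₁ / z ^ 14 - 42 * k₂ / z ^ 8‖
        ≤ |156 * k₁ / z ^ 14| + |42 * k₂ / z ^ 8| := abs_sub _ _
      _ = 156 * k₁ / z ^ 14 + 42 * k₂ / z ^ 8 := by
        rw [abs_of_pos (by positivity), abs_of_pos (by positivity)]
      _ ≤ 156 * k₁ / m ^ 14 + 42 * k₂ / m ^ 8 := by gcongr
  simpa only [Real.norm_eq_abs] using (convex_Ici m).norm_image_sub_le_of_norm_hasDerivWithin_le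
    (fun z hz => (hasDerivAt_LJ1rDeriv k₁ k₂ (hm.trans_le hz).ne').hasDerivWithinAt) hbound hy hx

theorem exists_abs_LJ1r_taylor_le {k₁ k₂ c : ℝ} (hk₁ : 0 < k₁) (hk₂ : 0 < k₂) (hc : 0 < c) :
    ∃ K, 0 ≤ K ∧ ∀ h, |h| ≤ c / 2 →
      |LJ1r k₁ k₂ (c + h) - LJ1r k₁ k₂ c - LJ1rDeriv k₁ k₂ c * h| ≤ K * h ^ 2 := by
  obtain ⟨K, hK, hlip⟩ := exists_abs_LJ1rDeriv_sub_le hk₁ hk₂ (half_pos hc)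
  have hcm : c ∈ Ici (c / 2) := show c / 2 ≤ c by linarith
  refine ⟨K, hK, fun h hh => ?_⟩
  have hx : c + h ∈ Ici (c / 2) := show c / 2 ≤ c + h by linarith [neg_abs_le h]
  simpa using abs_sub_sub_mul_le_of_abs_deriv_sub_le (convex_Ici _)
    (fun z hz => hasDerivAt_LJ1r k₁ k₂ (lt_of_lt_of_le (half_pos hc) hz).ne') hcm hK
    (fun z hz => hlip z hz c hcm) hx

theorem gammaNNN_pos {k₁ k₂ : ℝ} (hk₁ : 0 < k₁) (hk₂ : 0 < k₂) : 0 < gammaNNN k₁ k₂ := by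
  unfold gammaNNN
  positivity

theorem gammaNNN_pow_six {k₁ k₂ : ℝ} (hk₁ : 0 < k₁) (hk₂ : 0 < k₂) :
    gammaNNN k₁ k₂ ^ 6 =
      2 * k₁ / k₂ * ((1 + (2 : ℝ) ^ (-12 : ℤ)) / (1 + (2 : ℝ) ^ (-6 : ℤ))) := by
  rw [gammaNNN, mul_pow, ← Real.rpow_natCast, ← Real.rpow_natCast, ← Real.rpow_mul (by positivity),
    ← Real.rpow_mul (by positivity)]
  norm_num

theorem LJ1rDeriv_gammaNNN_add {k₁ k₂ : ℝ} (hk₁ : 0 < k₁) (hk₂ : 0 < k₂) :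
    LJ1rDeriv k₁ k₂ (gammaNNN k₁ k₂) + 2 * LJ1rDeriv k₁ k₂ (2 * gammaNNN k₁ k₂) = 0 := by
  have h6 := gammaNNN_pow_six hk₁ hk₂
  have hγ := (gammaNNN_pos hk₁ hk₂).ne'
  unfold LJ1rDeriv
  set γ := gammaNNN k₁ k₂
  field_simp at h6 ⊢
  norm_num at h6 ⊢
  linear_combination 12 * h6

def FcellReal (k₁ k₂ : ℝ) (a b : ℝ) : ℝ :=
  LJ2r k₁ k₂ (gammaNNN k₁ k₂ + (a + b) / 2) + 1 / 2 * LJ1r k₁ k₂ (gammaNNN k₁ k₂ + a) +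
    1 / 2 * LJ1r k₁ k₂ (gammaNNN k₁ k₂ + b) - JCBGammaNNN k₁ k₂

/-- Only meaningful when the cell energies are summable (otherwise `tsum` gives `0`). -/
def BgamReal (k₁ k₂ : ℝ) (q : ℕ → ℝ) : ℝ :=
  1 / 2 * LJ1r k₁ k₂ (gammaNNN k₁ k₂ + q 0) + ∑' k, FcellReal k₁ k₂ (q k) (q (k + 1))

section CellEnergy

variable {k₁ k₂ : ℝ}

theorem FcellReal_comm (a b : ℝ) : FcellReal k₁ k₂ a b = FcellReal k₁ k₂ b a := by
  unfold FcellReal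
  rw [add_comm a b]
  ring

theorem FcellReal_zero_zero : FcellReal k₁ k₂ 0 0 = 0 := by
  simp only [FcellReal, JCBGammaNNN, LJ2r]
  ring_nf

theorem exists_abs_FcellReal_le (hk₁ : 0 < k₁) (hk₂ : 0 < k₂) :
    ∃ C, ∀ a b, |a| ≤ gammaNNN k₁ k₂ / 4 → |b| ≤ gammaNNN k₁ k₂ / 4 →
      |FcellReal k₁ k₂ a b| ≤ C * (a ^ 2 + b ^ 2) := by
  set γ := gammaNNN k₁ k₂
  have hγ : 0 < γ := gammaNNN_pos hk₁ hk₂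
  obtain ⟨K₁, hK₁, h₁⟩ := exists_abs_LJ1r_taylor_le hk₁ hk₂ hγ
  obtain ⟨K₂, hK₂, h₂⟩ := exists_abs_LJ1r_taylor_le hk₁ hk₂ (by positivity : 0 < 2 * γ)
  refine ⟨K₁ + 2 * K₂, fun a b ha hb => ?_⟩
  set T₁ := fun h => LJ1r k₁ k₂ (γ + h) - LJ1r k₁ k₂ γ - LJ1rDeriv k₁ k₂ γ * h
  set T₂ := LJ1r k₁ k₂ (2 * γ + (a + b)) - LJ1r k₁ k₂ (2 * γ) - LJ1rDeriv k₁ k₂ (2 * γ) * (a + b)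
  -- the linear terms cancel because `γ` is a critical point of `J_CB`
  have hsplit : FcellReal k₁ k₂ a b = T₂ + 1 / 2 * T₁ a + 1 / 2 * T₁ b := by
    rw [FcellReal, JCBGammaNNN, LJ2r, show 2 * (γ + (a + b) / 2) = 2 * γ + (a + b) by ring]
    linear_combination (a + b) / 2 * LJ1rDeriv_gammaNNN_add hk₁ hk₂
  have hT₂ := h₂ (a + b) ((abs_add_le a b).trans (by linarith))
  have hTa := h₁ a (by linarith)
  have hTb := h₁ b (by linarith)
  calc |FcellReal k₁ k₂ a b| ≤ |T₂| + 1 / 2 * |T₁ a| + 1 / 2 * |T₁ b| := by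
        rw [hsplit]
        refine (abs_add_le _ _).trans (add_le_add ((abs_add_le _ _).trans_eq ?_) ?_)
        all_goals norm_num [abs_mul]
    _ ≤ K₂ * (a + b) ^ 2 + 1 / 2 * (K₁ * a ^ 2) + 1 / 2 * (K₁ * b ^ 2) := by gcongr
    _ ≤ (K₁ + 2 * K₂) * (a ^ 2 + b ^ 2) := by
        nlinarith [mul_nonneg hK₂ (sq_nonneg (a - b)), mul_nonneg hK₁ (sq_nonneg a),
          mul_nonneg hK₁ (sq_nonneg b)]

theorem summable_FcellReal (hk₁ : 0 < k₁) (hk₂ : 0 < k₂) {r : ℕ → ℝ}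
    (hsq : Summable fun i => r i ^ 2) : Summable fun k => FcellReal k₁ k₂ (r k) (r (k + 1)) := by
  obtain ⟨C, hC⟩ := exists_abs_FcellReal_le hk₁ hk₂
  have hsmall : ∀ᶠ k in atTop, |r k| ≤ gammaNNN k₁ k₂ / 4 :=
    ((tendsto_zero_iff_abs_tendsto_zero r).1 (tendsto_zero_of_summable_sq hsq)).eventually
      (ge_mem_nhds (by linarith [gammaNNN_pos hk₁ hk₂]))
  refine .of_norm_bounded_eventually_nat ((hsq.add ((summable_nat_add_iff 1).2 hsq)).mul_left C) ?_
  filter_upwards [hsmall, (tendsto_add_atTop_nat 1).eventually hsmall] with k h₀ h₁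
  exact hC _ _ h₀ h₁

theorem hasDerivAt_FcellReal_left {a b : ℝ} (ha : 0 < gammaNNN k₁ k₂ + a)
    (hb : 0 < gammaNNN k₁ k₂ + b) :
    HasDerivAt (fun x => FcellReal k₁ k₂ x b)
      (1 / 2 * deriv (LJ2r k₁ k₂) (gammaNNN k₁ k₂ + (a + b) / 2) +
        1 / 2 * deriv (LJ1r k₁ k₂) (gammaNNN k₁ k₂ + a)) a := by
  set γ := gammaNNN k₁ k₂
  have hmid : γ + (a + b) / 2 ≠ 0 := by linarith
  have h₂ := (hasDerivAt_LJ2r k₁ k₂ hmid).differentiableAt.hasDerivAt.comp a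
    ((((hasDerivAt_id a).add_const b).div_const 2).const_add γ)
  have h₁ := (hasDerivAt_LJ1r k₁ k₂ ha.ne').differentiableAt.hasDerivAt.comp a
    ((hasDerivAt_id a).const_add γ)
  exact (((h₂.add (h₁.const_mul (1 / 2))).add_const _).sub_const _).congr_deriv (by ring)

theorem hasDerivAt_FcellReal_right {a b : ℝ} (ha : 0 < gammaNNN k₁ k₂ + a)
    (hb : 0 < gammaNNN k₁ k₂ + b) :
    HasDerivAt (fun y => FcellReal k₁ k₂ a y)
      (1 / 2 * deriv (LJ2r k₁ k₂) (gammaNNN k₁ k₂ + (a + b) / 2) +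
        1 / 2 * deriv (LJ1r k₁ k₂) (gammaNNN k₁ k₂ + b)) b := by
  have h := hasDerivAt_FcellReal_left (k₁ := k₁) (k₂ := k₂) hb ha
  rw [add_comm b a] at h
  exact h.congr_of_eventuallyEq (.of_forall fun y => FcellReal_comm a y)

end CellEnergy

section ExtendedEnergy

variable {k₁ k₂ : ℝ}

theorem LJ1_of_pos {z : ℝ} (hz : 0 < z) : LJ1 k₁ k₂ z = LJ1r k₁ k₂ z := if_pos hz

theorem LJ1_of_nonpos {z : ℝ} (hz : ¬0 < z) : LJ1 k₁ k₂ z = ⊤ := if_neg hz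

theorem LJ1_ne_bot (z : ℝ) : LJ1 k₁ k₂ z ≠ ⊥ := by
  unfold LJ1
  split
  exacts [EReal.coe_ne_bot _, top_ne_bot]

theorem half_mul_LJ1_ne_bot (z : ℝ) : (((1 : ℝ) / 2 : ℝ) : EReal) * LJ1 k₁ k₂ z ≠ ⊥ := by
  by_cases hz : 0 < z
  · rw [LJ1_of_pos hz, ← EReal.coe_mul]
    exact EReal.coe_ne_bot _
  · rw [LJ1_of_nonpos hz, EReal.coe_mul_top_of_pos (by norm_num)]
    exact top_ne_bot

theorem Fcell_ne_bot (a b : ℝ) : Fcell k₁ k₂ a b ≠ ⊥ := by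
  rw [Fcell, sub_eq_add_neg, ← EReal.coe_neg]
  simp only [ne_eq, EReal.add_eq_bot_iff, not_or]
  exact ⟨⟨⟨LJ1_ne_bot _, half_mul_LJ1_ne_bot _⟩, half_mul_LJ1_ne_bot _⟩, EReal.coe_ne_bot _⟩

theorem Fcell_eq_top {a : ℝ} (ha : ¬0 < gammaNNN k₁ k₂ + a) (b : ℝ) : Fcell k₁ k₂ a b = ⊤ := by
  rw [Fcell, LJ1_of_nonpos ha, EReal.coe_mul_top_of_pos (by norm_num),
    EReal.add_top_of_ne_bot (x := LJ2 k₁ k₂ _) (LJ1_ne_bot _),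
    EReal.top_add_of_ne_bot (half_mul_LJ1_ne_bot _), sub_eq_add_neg, ← EReal.coe_neg,
    EReal.top_add_of_ne_bot (EReal.coe_ne_bot _)]

theorem Fcell_eq_coe {a b : ℝ} (ha : 0 < gammaNNN k₁ k₂ + a) (hb : 0 < gammaNNN k₁ k₂ + b) :
    Fcell k₁ k₂ a b = FcellReal k₁ k₂ a b := by
  rw [Fcell, LJ2, LJ1_of_pos (by linarith), LJ1_of_pos ha, LJ1_of_pos hb]
  norm_cast

theorem Bgam_eq_top {q : ℕ → ℝ} {i : ℕ} (hi : ¬0 < gammaNNN k₁ k₂ + q i) : Bgam k₁ k₂ q = ⊤ := by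
  rw [Bgam, (EReal.hasSum_top_of_ne_bot (fun k => Fcell_ne_bot _ _) (Fcell_eq_top hi _)).tsum_eq]
  exact EReal.add_top_of_ne_bot (half_mul_LJ1_ne_bot _)

theorem Bgam_eq_coe {q : ℕ → ℝ} (hq : ∀ k, 0 < gammaNNN k₁ k₂ + q k)
    (hsum : Summable fun k => FcellReal k₁ k₂ (q k) (q (k + 1))) :
    Bgam k₁ k₂ q = BgamReal k₁ k₂ q := by
  rw [Bgam, tsum_congr fun k => Fcell_eq_coe (hq k) (hq (k + 1)),
    (EReal.hasSum_coe hsum.hasSum).tsum_eq, LJ1_of_pos (hq 0), BgamReal]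
  norm_cast

theorem Bgam_zero_ne_top (hk₁ : 0 < k₁) (hk₂ : 0 < k₂) : Bgam k₁ k₂ (fun _ => 0) ≠ ⊤ := by
  rw [Bgam_eq_coe (fun _ => by simpa using gammaNNN_pos hk₁ hk₂)
    (by simpa only [FcellReal_zero_zero] using summable_zero)]
  exact EReal.coe_ne_top _

end ExtendedEnergy

section Perturbation

variable {k₁ k₂ : ℝ} {r : ℕ → ℝ}

theorem hasDerivAt_BgamReal_update_zero (hpos : ∀ k, 0 < gammaNNN k₁ k₂ + r k)
    (hsum : Summable fun k => FcellReal k₁ k₂ (r k) (r (k + 1))) :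
    HasDerivAt (fun t => BgamReal k₁ k₂ (update r 0 (r 0 + t)))
      (deriv (LJ1r k₁ k₂) (gammaNNN k₁ k₂ + r 0) +
        1 / 2 * deriv (LJ2r k₁ k₂) (gammaNNN k₁ k₂ + (r 0 + r 1) / 2)) 0 := by
  set S := ∑' k, FcellReal k₁ k₂ (r k) (r (k + 1))
  have hfun : (fun t => BgamReal k₁ k₂ (update r 0 (r 0 + t))) = fun t =>
      1 / 2 * LJ1r k₁ k₂ (gammaNNN k₁ k₂ + r 0 + t) +
        (FcellReal k₁ k₂ (r 0 + t) (r 1) - FcellReal k₁ k₂ (r 0) (r 1) + S) := by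
    funext t
    rw [BgamReal, cells_update_zero (FcellReal k₁ k₂), (hsum.hasSum.update 0 _).tsum_eq,
      update_self, add_assoc]
  have h₁ := HasDerivAt.comp_const_add (gammaNNN k₁ k₂ + r 0) 0 <| by
    rw [add_zero]; exact (hasDerivAt_LJ1r k₁ k₂ (hpos 0).ne').differentiableAt.hasDerivAt
  have h₂ := HasDerivAt.comp_const_add (r 0) 0 <| by
    rw [add_zero]; exact hasDerivAt_FcellReal_left (hpos 0) (hpos 1)
  rw [hfun]
  exact ((h₁.const_mul _).add ((h₂.sub_const _).add_const S)).congr_deriv (by ring)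

theorem hasDerivAt_BgamReal_update_succ (hpos : ∀ k, 0 < gammaNNN k₁ k₂ + r k)
    (hsum : Summable fun k => FcellReal k₁ k₂ (r k) (r (k + 1))) (i : ℕ) :
    HasDerivAt (fun t => BgamReal k₁ k₂ (update r (i + 1) (r (i + 1) + t)))
      (1 / 2 * deriv (LJ2r k₁ k₂) (gammaNNN k₁ k₂ + (r i + r (i + 1)) / 2) +
        deriv (LJ1r k₁ k₂) (gammaNNN k₁ k₂ + r (i + 1)) +
        1 / 2 * deriv (LJ2r k₁ k₂) (gammaNNN k₁ k₂ + (r (i + 1) + r (i + 2)) / 2)) 0 := by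
  set S := ∑' k, FcellReal k₁ k₂ (r k) (r (k + 1))
  have hfun : (fun t => BgamReal k₁ k₂ (update r (i + 1) (r (i + 1) + t))) = fun t =>
      1 / 2 * LJ1r k₁ k₂ (gammaNNN k₁ k₂ + r 0) +
        (FcellReal k₁ k₂ (r i) (r (i + 1) + t) - FcellReal k₁ k₂ (r i) (r (i + 1)) +
          (FcellReal k₁ k₂ (r (i + 1) + t) (r (i + 2)) - FcellReal k₁ k₂ (r (i + 1)) (r (i + 2)) +
            S)) := by
    funext t
    rw [BgamReal, cells_update_succ (FcellReal k₁ k₂),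
      ((hsum.hasSum.update (i + 1) _).update i _).tsum_eq, update_of_ne (Nat.succ_ne_zero i).symm,
      update_of_ne (by omega : i ≠ i + 1)]
  have h₁ := HasDerivAt.comp_const_add (r (i + 1)) 0 <| by
    rw [add_zero]; exact hasDerivAt_FcellReal_right (hpos i) (hpos (i + 1))
  have h₂ := HasDerivAt.comp_const_add (r (i + 1)) 0 <| by
    rw [add_zero]; exact hasDerivAt_FcellReal_left (hpos (i + 1)) (hpos (i + 2))
  rw [hfun]
  exact (((h₁.sub_const _).add ((h₂.sub_const _).add_const S)).const_add _).congr_deriv (by ring)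

theorem isLocalMin_BgamReal_update
    (hmin : ∀ s : ℕ → ℝ, Tendsto s atTop (𝓝 0) → Bgam k₁ k₂ r ≤ Bgam k₁ k₂ s)
    (hr : Tendsto r atTop (𝓝 0)) (hpos : ∀ k, 0 < gammaNNN k₁ k₂ + r k)
    (hsum : Summable fun k => FcellReal k₁ k₂ (r k) (r (k + 1))) (m : ℕ) :
    IsLocalMin (fun t => BgamReal k₁ k₂ (update r m (r m + t))) 0 := by
  filter_upwards [Ioo_mem_nhds (neg_neg_of_pos (hpos m)) (hpos m)] with t ht
  set q := update r m (r m + t) with hq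
  have hqpos : ∀ k, 0 < gammaNNN k₁ k₂ + q k := by
    intro k
    rcases eq_or_ne k m with rfl | hk
    · rw [hq, update_self]; linarith [ht.1]
    · rw [hq, update_of_ne hk]; exact hpos k
  have hqr : q =ᶠ[atTop] r :=
    eventually_atTop.2 ⟨m + 1, fun k hk => update_of_ne (by omega) _ _⟩
  have hqsum : Summable fun k => FcellReal k₁ k₂ (q k) (q (k + 1)) := by
    refine hsum.congr_atTop ?_
    filter_upwards [hqr, (tendsto_add_atTop_nat 1).eventually hqr] with k h₀ h₁
    rw [h₀, h₁]
  have h := hmin q (hr.congr' hqr.symm)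
  rw [Bgam_eq_coe hpos hsum, Bgam_eq_coe hqpos hqsum, EReal.coe_le_coe_iff] at h
  simpa only [add_zero, update_eq_self] using h

end Perturbation

/-- every minimizer `r ∈ ℓ²(ℕ)` of `B_γ` (over sequences tending to `0`)
satisfies `γ + r_i > 0` for all `i` and the Euler–Lagrange equations
`J₁'(γ+r₁) + ½J₂'(γ+(r₁+r₂)/2) = 0` and, for `i ≥ 2`,
`½J₂'(γ+(r_{i-1}+r_i)/2) + J₁'(γ+r_i) + ½J₂'(γ+(r_i+r_{i+1})/2) = 0`.
(Here `r i` plays the role of `r_{i+1}` of the paper.) -/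
theorem boundary_layer_euler_lagrange (k₁ k₂ : ℝ) (hk₁ : 0 < k₁) (hk₂ : 0 < k₂)
    (r : ℕ → ℝ) (hr₂ : Memℓp r 2)
    (hmin : Bgam k₁ k₂ r = sInf {y : EReal | ∃ s : ℕ → ℝ,
      Filter.Tendsto s Filter.atTop (nhds 0) ∧ y = Bgam k₁ k₂ s}) :
    (∀ i : ℕ, 0 < gammaNNN k₁ k₂ + r i) ∧
    deriv (LJ1r k₁ k₂) (gammaNNN k₁ k₂ + r 0) +
        1 / 2 * deriv (LJ2r k₁ k₂) (gammaNNN k₁ k₂ + (r 0 + r 1) / 2) = 0 ∧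
    (∀ i : ℕ,
      1 / 2 * deriv (LJ2r k₁ k₂) (gammaNNN k₁ k₂ + (r i + r (i + 1)) / 2) +
        deriv (LJ1r k₁ k₂) (gammaNNN k₁ k₂ + r (i + 1)) +
        1 / 2 * deriv (LJ2r k₁ k₂) (gammaNNN k₁ k₂ + (r (i + 1) + r (i + 2)) / 2) = 0) := by
  have hle : ∀ s : ℕ → ℝ, Tendsto s atTop (𝓝 0) → Bgam k₁ k₂ r ≤ Bgam k₁ k₂ s :=
    fun s hs => hmin ▸ sInf_le ⟨s, hs, rfl⟩
  have hfinite : Bgam k₁ k₂ r ≠ ⊤ :=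
    ne_top_of_le_ne_top (Bgam_zero_ne_top hk₁ hk₂) (hle _ tendsto_const_nhds)
  have hpos : ∀ i, 0 < gammaNNN k₁ k₂ + r i := fun i => by_contra fun hi => hfinite (Bgam_eq_top hi)
  have hr : Tendsto r atTop (𝓝 0) := tendsto_zero_of_summable_sq hr₂.summable_sq
  have hsum := summable_FcellReal hk₁ hk₂ hr₂.summable_sq
  refine ⟨hpos, ?_, fun i => ?_⟩
  · exact (isLocalMin_BgamReal_update hle hr hpos hsum 0).hasDerivAt_eq_zero
      (hasDerivAt_BgamReal_update_zero hpos hsum)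
  · exact (isLocalMin_BgamReal_update hle hr hpos hsum (i + 1)).hasDerivAt_eq_zero
      (hasDerivAt_BgamReal_update_succ hpos hsum i)
end
end
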